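/- arXiv:1010.3201 — 3 statements merged into one kernel-verified Lean document; each statement's English description precedes it below -/
import Mathlib

section
/- Shannon's lower bound: let u be a word of length n over alphabet {a₁,...,a_s} with m_i occurrences of a_i (so n = ∑ m_i, n > 0). For any prefix-free family of binary words w₁,...,w_s, the word ξ obtained by substituting w_i for each occurrence of a_i satisfies |ξ| ≥ nH, where H = -∑ (m_i/n) log(m_i/n) is the entropy of the frequency distribution. -/
/-!
By Kraft's inequality a prefix-free code has `∑ 2^(-|wᵢ|) ≤ 1`, so `qᵢ = 2^(-|wᵢ|)` is a
sub-probability vector. Gibbs' inequality `∑ pᵢ log qᵢ ≤ ∑ pᵢ log pᵢ`, a consequence of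
`log x ≤ x - 1`, applied to the frequencies `pᵢ = mᵢ / n` gives `H ≤ ∑ pᵢ |wᵢ|`.
-/

open Real

def PrefixFreeFamily {s : ℕ} (w : Fin s → List Bool) : Prop :=
  ∀ i j : Fin s, i ≠ j → ¬ (w i <+: w j)

section Kraft

variable {ι α : Type*} {w : ι → List α}

theorem injective_sigma_append_of_prefixFree (hw : ∀ i j, i ≠ j → ¬ w i <+: w j) :
    Function.Injective fun p : (_ : ι) × List α => w p.1 ++ p.2 := by
  rintro ⟨i, u⟩ ⟨j, v⟩ h
  obtain rfl | hij := eq_or_ne i j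
  · simpa using h
  · exfalso
    obtain hp | hp := List.prefix_or_prefix_of_prefix ⟨u, h⟩ (List.prefix_append (w j) v)
    · exact hw i j hij hp
    · exact hw j i hij.symm hp

variable [Fintype ι] [Fintype α]

/-- Padding each `w i` to every possible word of length `L` never produces the same word twice. -/
theorem sum_card_pow_sub_length_le_of_prefixFree (hw : ∀ i j, i ≠ j → ¬ w i <+: w j) {L : ℕ}
    (hL : ∀ i, (w i).length ≤ L) :
    ∑ i, Fintype.card α ^ (L - (w i).length) ≤ Fintype.card α ^ L := by
  let pad : ((i : ι) × List.Vector α (L - (w i).length)) → List.Vector α L :=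
    fun p => ⟨w p.1 ++ p.2.toList, by have := hL p.1; simp; omega⟩
  have hpad : Function.Injective pad := by
    rintro ⟨i, u⟩ ⟨j, v⟩ h
    obtain ⟨rfl, huv⟩ := Sigma.mk.inj_iff.1 <|
      injective_sigma_append_of_prefixFree hw (congrArg Subtype.val h)
    exact congrArg _ (List.Vector.toList_injective (eq_of_heq huv))
  simpa using Fintype.card_le_of_injective pad hpad

theorem kraft_inequality [Nonempty α] (hw : ∀ i j, i ≠ j → ¬ w i <+: w j) :
    ∑ i, (Fintype.card α : ℝ)⁻¹ ^ (w i).length ≤ 1 := by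
  set L := Finset.univ.sup fun i => (w i).length
  have hL (i : ι) : (w i).length ≤ L := Finset.le_sup (f := fun i => (w i).length) (by simp)
  have hD : (0 : ℝ) < Fintype.card α := by exact_mod_cast Fintype.card_pos
  have hterm (i : ι) : (Fintype.card α : ℝ)⁻¹ ^ (w i).length =
      (Fintype.card α : ℝ) ^ (L - (w i).length) / (Fintype.card α : ℝ) ^ L := by
    rw [pow_sub₀ _ hD.ne' (hL i), inv_pow]
    field_simp
  simp only [hterm, ← Finset.sum_div]
  rw [div_le_one (by positivity)]
  exact_mod_cast sum_card_pow_sub_length_le_of_prefixFree hw hL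

end Kraft

section Gibbs

theorem mul_log_sub_mul_log_le_sub {p q : ℝ} (hp : 0 ≤ p) (hq : 0 < q) :
    p * log q - p * log p ≤ q - p := by
  obtain rfl | hp := hp.eq_or_lt
  · simpa using hq.le
  have hlog := log_le_sub_one_of_pos (div_pos hq hp)
  rw [log_div hq.ne' hp.ne'] at hlog
  calc p * log q - p * log p = p * (log q - log p) := by ring
    _ ≤ p * (q / p - 1) := by gcongr
    _ = q - p := by field_simp

variable {ι : Type*} [Fintype ι] {p q : ι → ℝ}

theorem sum_mul_log_le_sum_mul_log (hp : ∀ i, 0 ≤ p i) (hq : ∀ i, 0 < q i)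
    (hpq : ∑ i, q i ≤ ∑ i, p i) :
    ∑ i, p i * log (q i) ≤ ∑ i, p i * log (p i) := by
  have := Finset.sum_le_sum fun i (_ : i ∈ Finset.univ) => mul_log_sub_mul_log_le_sub (hp i) (hq i)
  rw [Finset.sum_sub_distrib, Finset.sum_sub_distrib] at this
  linarith

theorem sum_mul_logb_le_sum_mul_logb {b : ℝ} (hb : 1 < b) (hp : ∀ i, 0 ≤ p i)
    (hq : ∀ i, 0 < q i) (hpq : ∑ i, q i ≤ ∑ i, p i) :
    ∑ i, p i * logb b (q i) ≤ ∑ i, p i * logb b (p i) := by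
  simp only [logb, ← mul_div_assoc, ← Finset.sum_div]
  exact div_le_div_of_nonneg_right (sum_mul_log_le_sum_mul_log hp hq hpq) (log_pos hb).le

end Gibbs

/-- Shannon's lower bound: the length `∑ mᵢ |wᵢ|` of the encoded word is at least `n·H`. -/
theorem shannon_lower_bound (s : ℕ) (m : Fin s → ℕ) (n : ℕ)
    (hn : n = ∑ i, m i) (hn0 : 0 < n)
    (w : Fin s → List Bool) (hw : PrefixFreeFamily w) :
    (n : ℝ) * (-(∑ i, ((m i : ℝ) / n) * logb 2 ((m i : ℝ) / n))) ≤
      ∑ i, (m i : ℝ) * (w i).length := by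
  have hn' : (0 : ℝ) < n := by exact_mod_cast hn0
  have hfreq : ∑ i, (m i : ℝ) / n = 1 := by
    rw [← Finset.sum_div, div_eq_one_iff_eq hn'.ne', hn, Nat.cast_sum]
  have hkraft : ∑ i, (2 : ℝ)⁻¹ ^ (w i).length ≤ ∑ i, (m i : ℝ) / n := by
    simpa [hfreq] using kraft_inequality hw
  have hgibbs := sum_mul_logb_le_sum_mul_logb one_lt_two (fun i => by positivity)
    (fun i => by positivity) hkraft
  calc (n : ℝ) * -(∑ i, ((m i : ℝ) / n) * logb 2 ((m i : ℝ) / n))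
      ≤ n * -(∑ i, ((m i : ℝ) / n) * logb 2 ((2 : ℝ)⁻¹ ^ (w i).length)) := by gcongr
    _ = ∑ i, (m i : ℝ) * (w i).length := by
      simp only [logb_pow, logb_inv, logb_self_eq_one one_lt_two, Finset.mul_sum,
        ← Finset.sum_neg_distrib]
      refine Finset.sum_congr rfl fun i _ => ?_
      field_simp
end

section
/- Invariance theorem: there exists a partial computable function V : {0,1}* ⇀ ℕ such that for every partial computable function φ : {0,1}* ⇀ ℕ there is a constant c with K_V(y) ≤ K_φ(y) + c for all y ∈ ℕ, where K_ψ(y) = min{|p| : ψ(p) = y} (min ∅ = ∞, values in ℕ∞). -/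
/-!
A program for `φ` is turned into a program for the universal machine by prefixing it with a
self-delimiting description `1^e 0` of a code `e` for `φ`. This costs `e + 1` extra bits,
a constant independent of the program.
-/

/-- Kolmogorov complexity associated to a partial function `ψ : {0,1}* ⇀ α`:
the least length of a word `p` with `ψ(p) = y` (with `min ∅ = ⊤` in `ℕ∞`). -/
noncomputable def Kf {α : Type} (ψ : List Bool →. α) (y : α) : ℕ∞ :=
  sInf {n : ℕ∞ | ∃ p : List Bool, y ∈ ψ p ∧ (p.length : ℕ∞) = n}

open Nat.Partrec (Code)
open Encodable Denumerable

theorem Partrec.exists_code {α σ : Type*} [Primcodable α] [Primcodable σ] {f : α →. σ}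
    (hf : Partrec f) : ∃ c : Code, ∀ a, c.eval (encode a) = (f a).map encode := by
  obtain ⟨c, hc⟩ := Nat.Partrec.Code.exists_code.1 hf
  exact ⟨c, fun a => by simp [hc, encodek]⟩

theorem Kf_le_add_of_forall_mem {α : Type} {φ ψ : List Bool →. α} (f : List Bool → List Bool)
    (c : ℕ) (hf : ∀ p, ∀ y ∈ φ p, y ∈ ψ (f p)) (hlen : ∀ p, (f p).length ≤ p.length + c)
    (y : α) : Kf ψ y ≤ Kf φ y + c := by
  conv_rhs => rw [Kf, ENat.sInf_add]
  refine le_iInf₂ fun n ⟨p, hp, hn⟩ => hn ▸ ?_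
  calc Kf ψ y ≤ (f p).length := sInf_le ⟨f p, hf p y hp, rfl⟩
    _ ≤ p.length + c := mod_cast hlen p

def unaryPrefixed (e : ℕ) (q : List Bool) : List Bool :=
  List.replicate e true ++ false :: q

@[simp]
theorem length_unaryPrefixed (e : ℕ) (q : List Bool) :
    (unaryPrefixed e q).length = q.length + (e + 1) := by
  simp only [unaryPrefixed, List.length_append, List.length_replicate, List.length_cons]
  omega

@[simp]
theorem idxOf_false_unaryPrefixed (e : ℕ) (q : List Bool) :
    (unaryPrefixed e q).idxOf false = e := by
  induction e with
  | zero => simp [unaryPrefixed]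
  | succ e ih => simpa [unaryPrefixed, List.replicate_succ, List.idxOf_cons_ne] using ih

@[simp]
theorem drop_unaryPrefixed (e : ℕ) (q : List Bool) : (unaryPrefixed e q).drop (e + 1) = q := by
  simp [unaryPrefixed, List.drop_append]

/-- On `1^e 0 q`, run the `e`-th code on `q`. -/
def universalMachine (p : List Bool) : Part ℕ :=
  (ofNat Code (p.idxOf false)).eval (encode (p.drop (p.idxOf false + 1)))

theorem universalMachine_partrec : Partrec universalMachine := by
  have hidx : Primrec fun p : List Bool => p.idxOf false :=
    Primrec.list_idxOf.comp (Primrec.const false) Primrec.id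
  exact Nat.Partrec.Code.eval_part.comp ((Computable.ofNat Code).comp hidx.to_comp)
    (Computable.encode.comp (Primrec.list_drop.comp (Primrec.succ.comp hidx) Primrec.id).to_comp)

theorem universalMachine_unaryPrefixed (c : Code) (q : List Bool) :
    universalMachine (unaryPrefixed (encode c) q) = c.eval (encode q) := by
  simp [universalMachine]

theorem exists_universalMachine_unaryPrefixed_eq {φ : List Bool →. ℕ} (hφ : Partrec φ) :
    ∃ e, ∀ q, universalMachine (unaryPrefixed e q) = φ q := by
  obtain ⟨c, hc⟩ := hφ.exists_code
  exact ⟨encode c, fun q => by simp [universalMachine_unaryPrefixed, hc, Part.map_id']⟩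

/-- The invariance theorem: there is an optimal partial computable function. -/
theorem invariance_theorem :
    ∃ V : List Bool →. ℕ, Partrec V ∧
      ∀ φ : List Bool →. ℕ, Partrec φ →
        ∃ c : ℕ, ∀ y : ℕ, Kf V y ≤ Kf φ y + (c : ℕ∞) := by
  refine ⟨universalMachine, universalMachine_partrec, fun φ hφ => ?_⟩
  obtain ⟨e, he⟩ := exists_universalMachine_unaryPrefixed_eq hφ
  exact ⟨e + 1, Kf_le_add_of_forall_mem (unaryPrefixed e) (e + 1)
    (fun p y hy => by rwa [he]) (fun p => (length_unaryPrefixed e p).le)⟩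
end

section
/- Kolmogorov complexity K : ℕ → ℕ is not a computable function. -/
/-- `V` is optimal: it is partial computable and `K_V` is minimal, up to an
additive constant, among the `K_φ` for `φ` partial computable. -/
def OptimalFn {α : Type} [Primcodable α] (V : List Bool →. α) : Prop :=
  Partrec V ∧ ∀ φ : List Bool →. α, Partrec φ →
    ∃ c : ℕ, ∀ y : α, Kf V y ≤ Kf φ y + (c : ℕ∞)

/-!
Berry's paradox. If `K` were computable, so would be `n ↦ f n`, the first `y` with `K y ≥ n`
(it exists since only finitely many `y` have short descriptions). Then `y = f (m²)` is described
by any word of length `m`, so `m² ≤ K y ≤ m + c` for the constant `c` of optimality, which fails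
for `m = c + 2`.
-/

section Kf

variable {α : Type} {ψ : List Bool →. α}

lemma Kf_le_of_mem {y : α} {p : List Bool} (h : y ∈ ψ p) : Kf ψ y ≤ p.length :=
  sInf_le ⟨p, h, rfl⟩

lemma exists_mem_length_lt_of_Kf_lt {y : α} {n : ℕ} (h : Kf ψ y < n) :
    ∃ p : List Bool, y ∈ ψ p ∧ p.length < n := by
  obtain ⟨_, ⟨p, hp, rfl⟩, hlt⟩ := sInf_lt_iff.1 h
  exact ⟨p, hp, mod_cast hlt⟩

lemma finite_setOf_Kf_lt (ψ : List Bool →. α) (n : ℕ) : {y | Kf ψ y < n}.Finite := by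
  refine ((List.finite_length_lt Bool n).biUnion fun p _ =>
    Set.Subsingleton.finite (s := {y | y ∈ ψ p}) fun _ hy _ hz => Part.mem_unique hy hz).subset ?_
  intro y hy
  obtain ⟨p, hp, hlen⟩ := exists_mem_length_lt_of_Kf_lt hy
  exact Set.mem_biUnion hlen hp

lemma exists_le_Kf [Infinite α] (ψ : List Bool →. α) (n : ℕ) : ∃ y, (n : ℕ∞) ≤ Kf ψ y := by
  obtain ⟨y, hy⟩ := (finite_setOf_Kf_lt ψ n).infinite_compl.nonempty
  exact ⟨y, not_lt.1 hy⟩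

lemma Kf_comp_length_le (h : ℕ → α) (m : ℕ) : Kf (fun p => Part.some (h p.length)) (h m) ≤ m := by
  simpa using Kf_le_of_mem (ψ := fun p => Part.some (h p.length)) (p := List.replicate m true)
    (by simp)

end Kf

-- `p ↦ p.length` describes every `y` by a word of length `y`.
lemma OptimalFn.Kf_ne_top {V : List Bool →. ℕ} (hV : OptimalFn V) (y : ℕ) : Kf V y ≠ ⊤ := by
  obtain ⟨c, hc⟩ := hV.2 (fun p => Part.some p.length) Computable.list_length
  have hle : Kf V y ≤ y + c := (hc y).trans (by gcongr; exact Kf_comp_length_le id y)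
  exact ne_top_of_le_ne_top (by simp) hle

lemma exists_computable_le_of_unbounded {g : ℕ → ℕ} (hg : Computable g)
    (hunb : ∀ n, ∃ y, n ≤ g y) : ∃ f : ℕ → ℕ, Computable f ∧ ∀ n, n ≤ g (f n) :=
  ⟨fun n => Nat.find (hunb n),
    Computable.find (Primrec.nat_le.decide.to_comp.comp Computable.fst
      (hg.comp Computable.snd)).computablePred hunb,
    fun n => Nat.find_spec (hunb n)⟩

theorem K_not_computable_general (V : List Bool →. ℕ) (hV : OptimalFn V) :
    ¬ Computable (fun y : ℕ => (Kf V y).toNat) := by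
  intro hK
  have hunb : ∀ n, ∃ y, n ≤ (Kf V y).toNat := fun n =>
    (exists_le_Kf V n).imp fun y hy => by simpa using ENat.toNat_le_toNat hy (hV.Kf_ne_top y)
  obtain ⟨f, hf, hfK⟩ := exists_computable_le_of_unbounded hK hunb
  let φ : List Bool →. ℕ := fun p => Part.some (f (p.length * p.length))
  obtain ⟨c, hc⟩ := hV.2 φ (hf.comp (Primrec.nat_mul.comp Primrec.list_length
    Primrec.list_length).to_comp)
  set m := c + 2 with hm
  have hsq : ((m * m : ℕ) : ℕ∞) ≤ m + c :=
    calc ((m * m : ℕ) : ℕ∞) ≤ (Kf V (f (m * m))).toNat := mod_cast hfK (m * m)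
      _ ≤ Kf V (f (m * m)) := ENat.natCast_toNat_le_self _
      _ ≤ Kf φ (f (m * m)) + c := hc _
      _ ≤ m + c := by gcongr; exact Kf_comp_length_le (fun k => f (k * k)) m
  have : m * m ≤ m + c := mod_cast hsq
  nlinarith [hm]

/-- `K` is not computable. -/
theorem K_not_computable (V : List Bool →. ℕ) (hV : OptimalFn V)
    (htot : ∀ y : ℕ, Kf V y ≠ ⊤) :
    ¬ Computable (fun y : ℕ => (Kf V y).toNat) :=
  K_not_computable_general V hV
end
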